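/- arXiv:2405.09917 — 5 statements merged into one kernel-verified Lean document; each statement's English description precedes it below -/
import Mathlib

section
/- Fix f ∈ C_λ and an interval J = [a,b] ⊆ I. Then for every ε > 0 there exists δ > 0 such that for every g ∈ C_λ with ρ(f,g) < δ one has λ(f⁻¹(J) △ g⁻¹(J)) < ε, where △ denotes symmetric difference. -/
/-! If `f` and `g` are uniformly `δ`-close, a point can lie in exactly one of `f⁻¹(J)` and
`g⁻¹(J)` only if `f` maps it `δ`-close to an endpoint of `J`. Since `f` preserves `λ`, the
set of such points has measure at most `λ(B(a, δ) ∪ B(b, δ)) ≤ 4δ`. -/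

open MeasureTheory Set
open scoped ENNReal
open Metric

lemma mem_Icc_iff_of_dist_lt {a b y z δ : ℝ} (hy : y ∉ ball a δ ∪ ball b δ)
    (hyz : dist y z < δ) : y ∈ Icc a b ↔ z ∈ Icc a b := by
  simp only [mem_union, mem_ball, Real.dist_eq, abs_lt, not_or, not_and_or, not_lt] at hy hyz
  constructor <;> rintro ⟨h₁, h₂⟩ <;> constructor <;> rcases hy with ⟨ha | ha, hb | hb⟩ <;> linarith

lemma preimage_symmDiff_Icc_subset {α : Type*} {f g : α → ℝ} {a b δ : ℝ}
    (hfg : ∀ x, dist (f x) (g x) < δ) :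
    symmDiff (f ⁻¹' Icc a b) (g ⁻¹' Icc a b) ⊆ f ⁻¹' (ball a δ ∪ ball b δ) := by
  intro x hx
  by_contra hy
  have := mem_Icc_iff_of_dist_lt hy (hfg x)
  rw [mem_symmDiff] at hx
  tauto

lemma unitInterval.volume_preimage_coe_le (s : Set ℝ) :
    volume ((↑) ⁻¹' s : Set unitInterval) ≤ volume s := by
  rw [unitInterval.volume_def, (MeasurableEmbedding.subtype_coe measurableSet_Icc).comap_preimage]
  exact measure_mono inter_subset_left

theorem stmt3_general (f : C(unitInterval, unitInterval))
    (hf : MeasurePreserving f volume volume)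
    (a b : ℝ)
    (ε : ℝ) (hε : 0 < ε) :
    ∃ δ > (0 : ℝ), ∀ g : C(unitInterval, unitInterval),
      MeasurePreserving g volume volume → dist f g < δ →
      volume (symmDiff
          (⇑f ⁻¹' {x : unitInterval | a ≤ (x : ℝ) ∧ (x : ℝ) ≤ b})
          (⇑g ⁻¹' {x : unitInterval | a ≤ (x : ℝ) ∧ (x : ℝ) ≤ b}))
        < ENNReal.ofReal ε := by
  set δ := ε / 5 with hδ
  refine ⟨δ, by positivity, fun g _ hfg => ?_⟩
  have hsub := preimage_symmDiff_Icc_subset (a := a) (b := b)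
    (f := fun x ↦ (f x : ℝ)) (g := fun x ↦ (g x : ℝ))
    fun x ↦ (ContinuousMap.dist_apply_le_dist x).trans_lt hfg
  calc _ ≤ volume (f ⁻¹' ((↑) ⁻¹' (ball a δ ∪ ball b δ))) := measure_mono hsub
    _ = volume ((↑) ⁻¹' (ball a δ ∪ ball b δ) : Set unitInterval) :=
        hf.measure_preimage
          (measurable_subtype_coe (measurableSet_ball.union measurableSet_ball)).nullMeasurableSet
    _ ≤ volume (ball a δ) + volume (ball b δ) :=
        (unitInterval.volume_preimage_coe_le _).trans (measure_union_le _ _)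
    _ = ENNReal.ofReal (4 * δ) := by
        rw [Real.volume_ball, Real.volume_ball, ← ENNReal.ofReal_add (by positivity) (by positivity)]
        ring_nf
    _ < ENNReal.ofReal ε := (ENNReal.ofReal_lt_ofReal_iff hε).mpr (by rw [hδ]; linarith)

/-- Fix `f ∈ C_λ` and an interval `J = [a,b] ⊆ [0,1]`. For every `ε > 0` there is `δ > 0`
such that every `g ∈ C_λ` with `ρ(f,g) < δ` satisfies `λ(f⁻¹(J) △ g⁻¹(J)) < ε`. -/
theorem stmt3 (f : C(unitInterval, unitInterval))
    (hf : MeasurePreserving f volume volume)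
    (a b : ℝ) (ha : 0 ≤ a) (hab : a ≤ b) (hb : b ≤ 1)
    (ε : ℝ) (hε : 0 < ε) :
    ∃ δ > (0 : ℝ), ∀ g : C(unitInterval, unitInterval),
      MeasurePreserving g volume volume → dist f g < δ →
      volume (symmDiff
          (⇑f ⁻¹' {x : unitInterval | a ≤ (x : ℝ) ∧ (x : ℝ) ≤ b})
          (⇑g ⁻¹' {x : unitInterval | a ≤ (x : ℝ) ∧ (x : ℝ) ≤ b}))
        < ENNReal.ofReal ε :=
  stmt3_general f hf a b ε hε
end

section
/- Let P = {P₁,…,P_k} be a finite partition of I consisting of intervals and let n ∈ ℕ. Then the map f ↦ h_n(f,P), defined on C_λ, is continuous with respect to the uniform metric. -/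
open MeasureTheory Set
open scoped ENNReal

noncomputable section

/-- `C_λ`: continuous maps of `[0,1]` preserving Lebesgue measure, with the uniform metric. -/
abbrev CLam : Type := {f : C(unitInterval, unitInterval) // MeasurePreserving f volume volume}

/-- The atom `P_{s 0} ∩ f⁻¹(P_{s 1}) ∩ ⋯ ∩ f^{-(n-1)}(P_{s (n-1)})`
of the join `⋁_{i=0}^{n-1} f^{-i} P`. -/
def joinAtom (f : unitInterval → unitInterval) {k : ℕ} (P : Fin k → Set unitInterval)
    (n : ℕ) (s : Fin n → Fin k) : Set unitInterval :=
  ⋂ i : Fin n, f^[(i : ℕ)] ⁻¹' P (s i)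

/-- `h_n(f, P) = (1/n) H(⋁_{i=0}^{n-1} f^{-i} P)`. -/
def hnEnt (f : unitInterval → unitInterval) {k : ℕ} (P : Fin k → Set unitInterval)
    (n : ℕ) : ℝ :=
  (1 / (n : ℝ)) * ∑ s : Fin n → Fin k,
    -((volume (joinAtom f P n s)).toReal * Real.log (volume (joinAtom f P n s)).toReal)

/-- `h(f, P) = lim_n h_n(f, P)`; since `n ↦ h_n(f,P)` is non-increasing and nonnegative,
the limit equals the infimum. -/
def hEnt (f : unitInterval → unitInterval) {k : ℕ} (P : Fin k → Set unitInterval) : ℝ :=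
  ⨅ n : ℕ, hnEnt f P (n + 1)

/-- A finite (mod measure zero) partition of `[0,1]` into measurable sets. -/
structure IsAEPartition {k : ℕ} (P : Fin k → Set unitInterval) : Prop where
  meas : ∀ i, MeasurableSet (P i)
  cover : (⋃ i, P i) = Set.univ
  aedisj : ∀ i j, i ≠ j → volume (P i ∩ P j) = 0

/-- The measure-theoretic entropy of `f` with respect to Lebesgue measure:
`h_λ(f) = sup {h(f,P) : P a finite partition of I}`. -/
def hLam (f : unitInterval → unitInterval) : ℝ≥0∞ :=
  ⨆ (k : ℕ) (P : Fin k → Set unitInterval) (_ : IsAEPartition P), ENNReal.ofReal (hEnt f P)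

/-! For measure-preserving continuous maps, uniform convergence `g → f` forces
`λ(g⁻¹ A ∆ f⁻¹ A) → 0` for every measurable `A` (an inner-regularity argument, available in
Mathlib as `tendsto_measure_symmDiff_preimage_nhds_zero`). Since `f ↦ f^i` is continuous, the
measure of each atom `⋂ i, f^{-i} P_{s i}` of the join depends continuously on `f`, and `h_n(f, P)`
is a continuous function of these finitely many measures. -/

open Filter Topology
open scoped symmDiff

theorem iInf_symmDiff_iInf_le {α ι : Type*} [CompleteBooleanAlgebra α] {f g : ι → α} :
    (⨅ i, f i) ∆ (⨅ i, g i) ≤ ⨆ i, f i ∆ g i := by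
  simpa only [← compl_iInf, compl_symmDiff_compl] using
    iSup_symmDiff_iSup_le (f := fun i => (f i)ᶜ) (g := fun i => (g i)ᶜ)

namespace ContinuousMap

variable {X : Type*} [TopologicalSpace X]

def iterate (f : C(X, X)) (n : ℕ) : C(X, X) :=
  ⟨(⇑f)^[n], f.continuous.iterate n⟩

@[simp]
theorem coe_iterate (f : C(X, X)) (n : ℕ) : ⇑(f.iterate n) = (⇑f)^[n] :=
  rfl

theorem continuous_iterate [LocallyCompactSpace X] (n : ℕ) :
    Continuous fun f : C(X, X) => f.iterate n := by
  induction n with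
  | zero => exact continuous_const (y := ContinuousMap.id X)
  | succ n ih => exact continuous_comp'.comp (continuous_id.prodMk ih)

end ContinuousMap

namespace MeasureTheory

variable {α X ι : Type*} [MeasurableSpace X] {μ : Measure X} {l : Filter α}

theorem tendsto_measure_iInter_symmDiff_iInter [Fintype ι] {A : α → ι → Set X} {B : ι → Set X}
    (h : ∀ i, Tendsto (fun a => μ (A a i ∆ B i)) l (𝓝 0)) :
    Tendsto (fun a => μ ((⋂ i, A a i) ∆ ⋂ i, B i)) l (𝓝 0) := by
  have hsum : Tendsto (fun a => ∑ i, μ (A a i ∆ B i)) l (𝓝 0) := by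
    simpa only [Finset.sum_const_zero] using tendsto_finsetSum Finset.univ fun i _ => h i
  refine tendsto_of_tendsto_of_tendsto_of_le_of_le tendsto_const_nhds hsum
    (fun _ => zero_le) fun a => ?_
  calc μ ((⋂ i, A a i) ∆ ⋂ i, B i) ≤ μ (⋃ i, A a i ∆ B i) := measure_mono iInf_symmDiff_iInf_le
    _ ≤ ∑ i, μ (A a i ∆ B i) := measure_iUnion_fintype_le _ _

theorem tendsto_measureReal_of_tendsto_measure_symmDiff [IsFiniteMeasure μ] {A : α → Set X}
    {B : Set X} (hA : ∀ a, NullMeasurableSet (A a) μ) (hB : NullMeasurableSet B μ)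
    (h : Tendsto (fun a => μ (A a ∆ B)) l (𝓝 0)) :
    Tendsto (fun a => μ.real (A a)) l (𝓝 (μ.real B)) := by
  rw [tendsto_iff_dist_tendsto_zero]
  have hreal : Tendsto (fun a => μ.real (A a ∆ B)) l (𝓝 0) := by
    have := (ENNReal.tendsto_toReal ENNReal.zero_ne_top).comp h
    rwa [ENNReal.toReal_zero] at this
  exact squeeze_zero (fun _ => dist_nonneg) (fun a =>
    abs_measureReal_sub_le_measureReal_symmDiff (hA a) hB) hreal

end MeasureTheory

theorem continuous_measureReal_joinAtom {k : ℕ} {P : Fin k → Set unitInterval}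
    (hP : ∀ i, MeasurableSet (P i)) (n : ℕ) (s : Fin n → Fin k) :
    Continuous fun f : CLam => volume.real (joinAtom ⇑f.1 P n s) := by
  have hmeas (f : CLam) : MeasurableSet (joinAtom ⇑f.1 P n s) :=
    .iInter fun i => f.1.continuous.measurable.iterate _ (hP _)
  refine continuous_iff_continuousAt.2 fun f => ?_
  have hpreimage (i : Fin n) : Tendsto (fun g : CLam =>
      volume (((⇑g.1)^[i] ⁻¹' P (s i)) ∆ ((⇑f.1)^[i] ⁻¹' P (s i)))) (𝓝 f) (𝓝 0) := by
    have hiter : Tendsto (fun g : CLam => g.1.iterate i) (𝓝 f) (𝓝 (f.1.iterate i)) :=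
      ((ContinuousMap.continuous_iterate i).comp continuous_subtype_val).tendsto f
    simpa only [ContinuousMap.coe_iterate] using tendsto_measure_symmDiff_preimage_nhds_zero hiter
      (.of_forall fun g => g.2.iterate i) (f.2.iterate i) (hP (s i)).nullMeasurableSet
      (measure_ne_top _ _)
  exact tendsto_measureReal_of_tendsto_measure_symmDiff (fun g => (hmeas g).nullMeasurableSet)
    (hmeas f).nullMeasurableSet (tendsto_measure_iInter_symmDiff_iInter hpreimage)

theorem stmt5_general {k : ℕ} (P : Fin k → Set unitInterval) (hP : IsAEPartition P) (n : ℕ) :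
    Continuous fun f : CLam => hnEnt ⇑f.1 P n :=
  continuous_const.mul <| continuous_finsetSum _ fun s _ =>
    (Real.continuous_mul_log.comp (continuous_measureReal_joinAtom hP.meas n s)).neg

/-- Let `P = {P₁, …, P_k}` be a finite partition of `[0,1]` consisting of intervals and
`n ∈ ℕ`. The map `f ↦ h_n(f, P)` is continuous on `C_λ` (uniform metric). -/
theorem stmt5 {k : ℕ} (P : Fin k → Set unitInterval) (hP : IsAEPartition P)
    (hInt : ∀ i, (P i).OrdConnected) (n : ℕ) :
    Continuous fun f : CLam => hnEnt ⇑f.1 P n :=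
  stmt5_general P hP n

end
end

section
/- Let P be a finite partition of I into intervals, n ∈ ℕ, and β > 0. Then the set {f ∈ C_λ : h_n(f,P) < β} is open in C_λ with respect to the uniform metric. -/
open MeasureTheory Set
open scoped ENNReal

noncomputable section

/-!
When `g` is uniformly close to `f`, the atoms of `⋁_{i<n} g^{-i} P` and `⋁_{i<n} f^{-i} P` with
the same itinerary differ only inside the preimages under `f^i` of thin collars around the
boundaries of the pieces of `P`. As `f` preserves `λ`, these preimages are as small as the
collars, whose measure tends to that of the boundaries: zero for intervals. So the measures of
the atoms, and with them `h_n(·, P)`, depend continuously on `f ∈ C_λ`.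
-/

open Filter Topology Metric
open scoped symmDiff

theorem Topology.IsEmbedding.image_frontier_subset {X Y : Type*} [TopologicalSpace X]
    [TopologicalSpace Y] {f : X → Y} (hf : IsEmbedding f) (s : Set X) :
    f '' frontier s ⊆ frontier (f '' s) := by
  rintro _ ⟨x, ⟨hx_cl, hx_int⟩, rfl⟩
  refine ⟨mem_closure_image hf.continuous.continuousAt hx_cl, fun hx => hx_int ?_⟩
  rw [← hf.injective.preimage_image s]
  exact preimage_interior_subset_interior_preimage hf.continuous hx

theorem Set.OrdConnected.image_subtype_val {α : Type*} [Preorder α] {u : Set α}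
    [u.OrdConnected] {t : Set u} (ht : t.OrdConnected) : (Subtype.val '' t).OrdConnected :=
  ⟨by
    rintro _ ⟨x, hx, rfl⟩ _ ⟨y, hy, rfl⟩ z hz
    exact ⟨⟨z, OrdConnected.out ‹_› x.2 y.2 hz⟩, ht.out hx hy hz, rfl⟩⟩

theorem Set.OrdConnected.volume_frontier_unitInterval {s : Set unitInterval}
    (hs : s.OrdConnected) : volume (frontier s) = 0 := by
  have hconvex : Convex ℝ (Subtype.val '' s) := convex_iff_ordConnected.mpr (image_subtype_val hs)
  rw [unitInterval.volume_apply]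
  exact measure_mono_null (Topology.IsEmbedding.subtypeVal.image_frontier_subset s)
    (hconvex.addHaar_frontier volume)

section Collar

variable {X : Type*} [PseudoMetricSpace X]

def collar (r : ℝ) (s : Set X) : Set X :=
  cthickening r s ∩ cthickening r sᶜ

theorem isClosed_collar (r : ℝ) (s : Set X) : IsClosed (collar r s) :=
  isClosed_cthickening.inter isClosed_cthickening

theorem mem_collar_of_dist_le {r : ℝ} {s : Set X} {x y : X} (hxy : dist x y ≤ r) (hx : x ∈ s)
    (hy : y ∉ s) : x ∈ collar r s ∧ y ∈ collar r s :=
  ⟨⟨self_subset_cthickening s hx, mem_cthickening_of_dist_le x y r sᶜ hy hxy⟩,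
    ⟨mem_cthickening_of_dist_le y x r s hx (dist_comm x y ▸ hxy),
      self_subset_cthickening sᶜ hy⟩⟩

theorem biInter_collar (s : Set X) : ⋂ r > 0, collar r s = frontier s := by
  ext x
  simp [collar, frontier_eq_closure_inter_closure, closure_eq_iInter_cthickening, forall_and]

theorem tendsto_measure_collar [MeasurableSpace X] [OpensMeasurableSpace X] (μ : Measure X)
    [IsFiniteMeasure μ] (s : Set X) :
    Tendsto (fun r => μ (collar r s)) (𝓝[>] 0) (𝓝 (μ (frontier s))) := by
  rw [← biInter_collar]
  refine tendsto_measure_biInter_gt (fun r _ => (isClosed_collar r s).nullMeasurableSet)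
    (fun r r' _ hrr' => ?_) ⟨1, one_pos, measure_ne_top μ _⟩
  exact inter_subset_inter (cthickening_mono hrr' _) (cthickening_mono hrr' _)

end Collar

theorem ContinuousMap.continuous_iterate_s6 {X : Type*} [TopologicalSpace X] [LocallyCompactSpace X]
    (i : ℕ) : Continuous fun f : C(X, X) => (⟨f^[i], f.continuous.iterate i⟩ : C(X, X)) := by
  induction i with
  | zero => exact continuous_const (y := ContinuousMap.id X)
  | succ i ih =>
    have hsucc : (fun f : C(X, X) => (⟨f^[i + 1], f.continuous.iterate (i + 1)⟩ : C(X, X))) =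
        fun f => f.comp ⟨f^[i], f.continuous.iterate i⟩ := by
      funext f
      ext x
      exact Function.iterate_succ_apply' f i x
    rw [hsucc]
    exact continuous_id.compCM ih

theorem ContinuousMap.eventually_dist_iterate_lt {X : Type*} [MetricSpace X] [CompactSpace X]
    (f : C(X, X)) (i : ℕ) {r : ℝ} (hr : 0 < r) :
    ∀ᶠ g : C(X, X) in 𝓝 f, ∀ x, dist ((⇑g)^[i] x) ((⇑f)^[i] x) < r := by
  filter_upwards [tendsto_nhds.mp ((continuous_iterate_s6 i).tendsto f) r hr] with g hg x
  exact (dist_apply_le_dist (f := ⟨(⇑g)^[i], g.continuous.iterate i⟩) x).trans_lt hg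

section JoinAtom

variable {k : ℕ} {P : Fin k → Set unitInterval} {n : ℕ} {s : Fin n → Fin k}

theorem joinAtom_symmDiff_subset {f g : unitInterval → unitInterval} {r : ℝ}
    (hfg : ∀ i : Fin n, ∀ x, dist (g^[i] x) (f^[i] x) ≤ r) :
    joinAtom g P n s ∆ joinAtom f P n s ⊆ ⋃ i : Fin n, f^[i] ⁻¹' collar r (P (s i)) := by
  rintro x (⟨hg, hf⟩ | ⟨hf, hg⟩) <;>
    simp only [joinAtom, mem_iInter, mem_preimage, not_forall] at hf hg
  · obtain ⟨i, hi⟩ := hf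
    exact mem_iUnion.2 ⟨i, (mem_collar_of_dist_le (hfg i x) (hg i) hi).2⟩
  · obtain ⟨i, hi⟩ := hg
    exact mem_iUnion.2
      ⟨i, (mem_collar_of_dist_le ((dist_comm _ _).trans_le (hfg i x)) (hf i) hi).1⟩

theorem volume_joinAtom_symmDiff_le {f g : unitInterval → unitInterval}
    (hf : MeasurePreserving f volume volume) {r : ℝ}
    (hfg : ∀ i : Fin n, ∀ x, dist (g^[i] x) (f^[i] x) ≤ r) :
    volume (joinAtom g P n s ∆ joinAtom f P n s) ≤
      ∑ i : Fin n, volume (collar r (P (s i))) := by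
  refine (measure_mono (joinAtom_symmDiff_subset hfg)).trans
    ((measure_iUnion_fintype_le _ _).trans_eq (Finset.sum_congr rfl fun i _ => ?_))
  exact (hf.iterate i).measure_preimage (isClosed_collar r _).nullMeasurableSet

theorem measurableSet_joinAtom (hP : ∀ j, MeasurableSet (P j)) {f : unitInterval → unitInterval}
    (hf : Measurable f) : MeasurableSet (joinAtom f P n s) :=
  MeasurableSet.iInter fun i => (hf.iterate i) (hP (s i))

theorem continuous_volume_joinAtom (hP : ∀ j, MeasurableSet (P j))
    (hP_frontier : ∀ j, volume (frontier (P j)) = 0) :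
    Continuous fun f : CLam => volume.real (joinAtom f.1 P n s) := by
  refine continuous_iff_continuousAt.2 fun f => continuousAt_iff'.2 fun ε hε => ?_
  have hcollar : Tendsto (fun r => ∑ i : Fin n, volume (collar r (P (s i))))
      (𝓝[>] 0) (𝓝 0) := by
    simpa [hP_frontier] using
      tendsto_finsetSum Finset.univ fun i _ => tendsto_measure_collar volume (P (s i))
  obtain ⟨r, hr_small, hr⟩ := ((hcollar.eventually (gt_mem_nhds (ENNReal.ofReal_pos.2 hε))).and
    self_mem_nhdsWithin).exists
  have hclose :
      ∀ᶠ g : CLam in 𝓝 f, ∀ i : Fin n, ∀ x, dist ((⇑g.1)^[i] x) ((⇑f.1)^[i] x) < r :=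
    eventually_all.2 fun i => (continuous_subtype_val.tendsto f).eventually
      (f.1.eventually_dist_iterate_lt i hr)
  filter_upwards [hclose] with g hg
  have hsymm := volume_joinAtom_symmDiff_le (P := P) (s := s) f.2 fun i x => (hg i x).le
  calc dist (volume.real (joinAtom g.1 P n s)) (volume.real (joinAtom f.1 P n s))
      ≤ volume.real (joinAtom g.1 P n s ∆ joinAtom f.1 P n s) :=
        abs_measureReal_sub_le_measureReal_symmDiff
          (measurableSet_joinAtom hP g.2.measurable).nullMeasurableSet
          (measurableSet_joinAtom hP f.2.measurable).nullMeasurableSet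
    _ < ε := ENNReal.toReal_lt_of_lt_ofReal (hsymm.trans_lt hr_small)

theorem continuous_hnEnt (hP : ∀ j, MeasurableSet (P j))
    (hP_frontier : ∀ j, volume (frontier (P j)) = 0) :
    Continuous fun f : CLam => hnEnt f.1 P n :=
  continuous_const.mul <| continuous_finsetSum _ fun s _ =>
    (Real.continuous_mul_log.comp (continuous_volume_joinAtom (s := s) hP hP_frontier)).neg

end JoinAtom

theorem stmt6_general {k : ℕ} (P : Fin k → Set unitInterval)
    (hInt : ∀ i, (P i).OrdConnected) (n : ℕ) (β : ℝ) :
    IsOpen {f : CLam | hnEnt ⇑f.1 P n < β} :=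
  isOpen_lt (continuous_hnEnt (fun i => (hInt i).measurableSet)
    (fun i => (hInt i).volume_frontier_unitInterval)) continuous_const

/-- Let `P` be a finite partition of `[0,1]` into intervals, `n ∈ ℕ` and `β > 0`.
Then `{f ∈ C_λ : h_n(f, P) < β}` is open in `C_λ` (uniform metric). -/
theorem stmt6 {k : ℕ} (P : Fin k → Set unitInterval) (hP : IsAEPartition P)
    (hInt : ∀ i, (P i).OrdConnected) (n : ℕ) (β : ℝ) (hβ : 0 < β) :
    IsOpen {f : CLam | hnEnt ⇑f.1 P n < β} :=
  stmt6_general P hInt n β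

end
end

section
/- A continuous map f : I → ℝ is of nonmonotonic type if and only if for every x ∈ I the upper derivative D̄f(x) = +∞ and the lower derivative D̲f(x) = −∞. -/
open Filter

/-- `g` is non-decreasing at `x`: for some `δ > 0`, `g(t) ≤ g(x)` for
`t ∈ I ∩ (x−δ, x)` and `g(t) ≥ g(x)` for `t ∈ I ∩ (x, x+δ)`. -/
def NonDecreasingAt (g : unitInterval → ℝ) (x : unitInterval) : Prop :=
  ∃ δ : ℝ, 0 < δ ∧
    (∀ t : unitInterval, (x : ℝ) - δ < (t : ℝ) → (t : ℝ) < (x : ℝ) → g t ≤ g x) ∧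
    (∀ t : unitInterval, (x : ℝ) < (t : ℝ) → (t : ℝ) < (x : ℝ) + δ → g x ≤ g t)

/-- `g` is monotone at `x`: `g` or `−g` is non-decreasing at `x`. -/
def MonotoneAtPt (g : unitInterval → ℝ) (x : unitInterval) : Prop :=
  NonDecreasingAt g x ∨ NonDecreasingAt (fun t => -(g t)) x

/-- `g` is of monotonic type at `x`: for some `γ ∈ ℝ` the function
`g_{−γ} : t ↦ g(t) − γ t` is monotone at `x`. -/
def MonotonicTypeAt (g : unitInterval → ℝ) (x : unitInterval) : Prop :=
  ∃ γ : ℝ, MonotoneAtPt (fun t => g t - γ * (t : ℝ)) x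

/-- `g` is of nonmonotonic type: it is not of monotonic type at any point of `[0,1]`. -/
def NonmonotonicType (g : unitInterval → ℝ) : Prop :=
  ∀ x : unitInterval, ¬ MonotonicTypeAt g x

/-!
`g t - γ t` is non-decreasing at `x` exactly when the difference quotients of `g` at `x` are
eventually `≥ γ` (multiply through by `t - x`, whose sign depends on the side of `x`), and
symmetrically for non-increasing. So `g` is of monotonic type at `x` iff its difference quotients
at `x` are eventually bounded below or eventually bounded above, i.e. iff `D̲g(x) > -∞` or
`D̄g(x) < +∞`.
-/

open Topology

namespace EReal

variable {α : Type*} {f : α → ℝ} {l : Filter α}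

theorem liminf_coe_eq_bot_iff :
    liminf (fun a => (f a : EReal)) l = ⊥ ↔ ∀ γ : ℝ, ¬ ∀ᶠ a in l, γ ≤ f a := by
  constructor
  · intro h γ hγ
    have hle := le_liminf_of_le (by isBoundedDefault)
      (hγ.mono fun a ha => EReal.coe_le_coe_iff.2 ha)
    rw [h] at hle
    exact coe_ne_bot γ (le_bot_iff.1 hle)
  · intro h
    by_contra hne
    obtain ⟨γ, -, hγ⟩ := lt_iff_exists_real_btwn.1 (bot_lt_iff_ne_bot.2 hne)
    exact h γ ((eventually_lt_of_lt_liminf hγ).mono fun a ha => (EReal.coe_lt_coe_iff.1 ha).le)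

theorem limsup_coe_eq_top_iff :
    limsup (fun a => (f a : EReal)) l = ⊤ ↔ ∀ γ : ℝ, ¬ ∀ᶠ a in l, f a ≤ γ := by
  constructor
  · intro h γ hγ
    have hle := limsup_le_of_le (by isBoundedDefault)
      (hγ.mono fun a ha => EReal.coe_le_coe_iff.2 ha)
    rw [h] at hle
    exact coe_ne_top γ (top_le_iff.1 hle)
  · intro h
    by_contra hne
    obtain ⟨γ, hγ, -⟩ := lt_iff_exists_real_btwn.1 (lt_top_iff_ne_top.2 hne)
    exact h γ ((eventually_lt_of_limsup_lt hγ).mono fun a ha => (EReal.coe_lt_coe_iff.1 ha).le)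

end EReal

section DifferenceQuotient

variable (g : unitInterval → ℝ) (x : unitInterval) (γ : ℝ)

theorem nonDecreasingAt_sub_mul_iff :
    NonDecreasingAt (fun t => g t - γ * (t : ℝ)) x ↔
      ∀ᶠ t in 𝓝[≠] x, γ ≤ (g t - g x) / ((t : ℝ) - (x : ℝ)) := by
  have left (t : unitInterval) (ht : (t : ℝ) < x) :
      γ ≤ (g t - g x) / ((t : ℝ) - (x : ℝ)) ↔ g t - γ * t ≤ g x - γ * x := by
    rw [le_div_iff_of_neg (sub_neg.2 ht)]
    constructor <;> intro <;> linarith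
  have right (t : unitInterval) (ht : (x : ℝ) < t) :
      γ ≤ (g t - g x) / ((t : ℝ) - (x : ℝ)) ↔ g x - γ * x ≤ g t - γ * t := by
    rw [le_div_iff₀ (sub_pos.2 ht)]
    constructor <;> intro <;> linarith
  have dist_eq (t : unitInterval) : dist t x = |(t : ℝ) - x| := by
    rw [Subtype.dist_eq, Real.dist_eq]
  rw [eventually_nhdsWithin_iff, Metric.eventually_nhds_iff]
  constructor
  · rintro ⟨δ, hδ, hl, hr⟩
    refine ⟨δ, hδ, fun t htx hne => ?_⟩
    rw [dist_eq, abs_lt] at htx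
    rcases lt_or_gt_of_ne (Subtype.coe_ne_coe.2 hne) with ht | ht
    · exact (left t ht).2 (hl t (by linarith) ht)
    · exact (right t ht).2 (hr t ht (by linarith))
  · rintro ⟨δ, hδ, h⟩
    have close (t : unitInterval) (h₁ : (x : ℝ) - δ < t) (h₂ : (t : ℝ) < x + δ) :
        dist t x < δ := by
      rw [dist_eq, abs_lt]
      constructor <;> linarith
    refine ⟨δ, hδ, fun t h₁ h₂ => ?_, fun t h₁ h₂ => ?_⟩
    · exact (left t h₂).1 (h (close t h₁ (by linarith)) (Subtype.coe_ne_coe.1 h₂.ne))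
    · exact (right t h₁).1 (h (close t (by linarith) h₂) (Subtype.coe_ne_coe.1 h₁.ne'))

theorem nonDecreasingAt_neg_sub_mul_iff :
    NonDecreasingAt (fun t => -(g t - γ * (t : ℝ))) x ↔
      ∀ᶠ t in 𝓝[≠] x, (g t - g x) / ((t : ℝ) - (x : ℝ)) ≤ γ := by
  convert nonDecreasingAt_sub_mul_iff (fun t => -g t) x (-γ) using 2
  · ext t
    ring
  · ext t
    rw [neg_sub_neg, ← neg_sub (g x), neg_div, neg_le]

theorem monotonicTypeAt_iff :
    MonotonicTypeAt g x ↔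
      (∃ γ : ℝ, ∀ᶠ t in 𝓝[≠] x, γ ≤ (g t - g x) / ((t : ℝ) - (x : ℝ))) ∨
        ∃ γ : ℝ, ∀ᶠ t in 𝓝[≠] x, (g t - g x) / ((t : ℝ) - (x : ℝ)) ≤ γ := by
  simp only [MonotonicTypeAt, MonotoneAtPt, nonDecreasingAt_sub_mul_iff,
    nonDecreasingAt_neg_sub_mul_iff, exists_or]

end DifferenceQuotient

theorem stmt10_general (g : unitInterval → ℝ) :
    NonmonotonicType g ↔ ∀ x : unitInterval,
      Filter.limsup
          (fun t : unitInterval => (((g t - g x) / ((t : ℝ) - (x : ℝ))) : EReal))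
          (nhdsWithin x {x}ᶜ) = ⊤ ∧
      Filter.liminf
          (fun t : unitInterval => (((g t - g x) / ((t : ℝ) - (x : ℝ))) : EReal))
          (nhdsWithin x {x}ᶜ) = ⊥ := by
  refine forall_congr' fun x => ?_
  simp only [← EReal.coe_sub, ← EReal.coe_div, EReal.limsup_coe_eq_top_iff,
    EReal.liminf_coe_eq_bot_iff, monotonicTypeAt_iff, not_or, not_exists]
  exact and_comm

/-- A continuous `g : [0,1] → ℝ` is of nonmonotonic type if and only if at every
`x ∈ [0,1]` the upper derivative is `+∞` and the lower derivative is `−∞`. -/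
theorem stmt10 (g : unitInterval → ℝ) (hg : Continuous g) :
    NonmonotonicType g ↔ ∀ x : unitInterval,
      Filter.limsup
          (fun t : unitInterval => (((g t - g x) / ((t : ℝ) - (x : ℝ))) : EReal))
          (nhdsWithin x {x}ᶜ) = ⊤ ∧
      Filter.liminf
          (fun t : unitInterval => (((g t - g x) / ((t : ℝ) - (x : ℝ))) : EReal))
          (nhdsWithin x {x}ᶜ) = ⊥ :=
  stmt10_general g
end

section
/- Let f ∈ C_λ be a map other than the identity map id and the map 1 − id. Then the set B₀ := {c ∈ I : the level set Lev_f(c) = {x ∈ I : f(x) = c} has more than one point} contains an interval; in particular there is a set of positive Lebesgue measure on which f fails to be one-to-one. -/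
open MeasureTheory Set

/-!
A continuous injective self-map of `[0, 1]` is strictly monotone or strictly antitone, and measure
preservation applied to `f ⁻¹' [0, f x]` then forces `f x = x` or `f x = 1 - x`; hence `f u = f v`
for some `u < v`. Measure preservation also makes every fibre null, so `f` takes a value
`f w ≠ f u` on `[u, v]`. By the intermediate value theorem on `[u, w]` and on `[w, v]`, every value
strictly between `f u` and `f w` is attained twice, and the preimage of an interval of such values
has positive measure.
-/

section ValuesAttainedTwice

variable {α δ : Type*} [ConditionallyCompleteLinearOrder α] [TopologicalSpace α] [OrderTopology α]
  [DenselyOrdered α] [LinearOrder δ] [TopologicalSpace δ] [OrderClosedTopology δ]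
  {f : α → δ} {u v : α}

theorem Continuous.exists_ne_eq_of_mem_uIcc (hf : Continuous f) {w : α} (huw : u < w)
    (hwv : w < v) (hfuv : f u = f v) {c : δ} (hc : c ∈ uIcc (f u) (f w)) (hcw : c ≠ f w) :
    ∃ x y, x ≠ y ∧ f x = c ∧ f y = c := by
  obtain ⟨x, hx, rfl⟩ := intermediate_value_uIcc hf.continuousOn hc
  rw [hfuv, uIcc_comm] at hc
  obtain ⟨y, hy, hfy⟩ := intermediate_value_uIcc hf.continuousOn hc
  rw [uIcc_of_le huw.le] at hx
  rw [uIcc_of_le hwv.le] at hy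
  refine ⟨x, y, ?_, rfl, hfy⟩
  rintro rfl
  exact hcw (congrArg f (le_antisymm hx.2 hy.1))

theorem Continuous.exists_Icc_subset_of_eq [DenselyOrdered δ] (hf : Continuous f) (huv : u < v)
    (hfuv : f u = f v) (hnc : ∃ w ∈ Icc u v, f w ≠ f u) :
    ∃ a b, a < b ∧ Icc a b ⊆ {c | ∃ x y, x ≠ y ∧ f x = c ∧ f y = c} := by
  obtain ⟨w, hw, hfw⟩ := hnc
  have huw : u < w := hw.1.lt_of_ne (by rintro rfl; exact hfw rfl)
  have hwv : w < v := hw.2.lt_of_ne (by rintro rfl; exact hfw hfuv.symm)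
  obtain ⟨a, hma, haM⟩ := exists_between (min_lt_max.2 hfw.symm)
  obtain ⟨b, hab, hbM⟩ := exists_between haM
  refine ⟨a, b, hab, fun c hc => hf.exists_ne_eq_of_mem_uIcc huw hwv hfuv
    ⟨hma.le.trans hc.1, hc.2.trans hbM.le⟩ ?_⟩
  -- `f w` is an endpoint of `[[f u, f w]]`, so it cannot lie strictly inside
  rintro rfl
  have := hma.trans_le hc.1
  have := hc.2.trans_lt hbM
  grind

end ValuesAttainedTwice

theorem MeasureTheory.MeasurePreserving.exists_ne_of_measure_ne_zero {α β : Type*}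
    [MeasurableSpace α] [MeasurableSpace β] [MeasurableSingletonClass β] {μ : Measure α}
    {ν : Measure β} [NullSingletonClass ν] {f : α → β} (hf : MeasurePreserving f μ ν)
    {s : Set α} (hs : μ s ≠ 0) (c : β) : ∃ x ∈ s, f x ≠ c := by
  by_contra! h
  refine hs (measure_mono_null (t := f ⁻¹' {c}) h ?_)
  rw [hf.measure_preimage (measurableSet_singleton c).nullMeasurableSet, measure_singleton]

namespace unitInterval

variable {f : unitInterval → unitInterval}

theorem eq_id_of_measurePreserving_of_strictMono (hf : MeasurePreserving f volume volume)
    (hmono : StrictMono f) : f = id := by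
  funext x
  have h := hf.measure_preimage (s := Iic (f x)) measurableSet_Iic.nullMeasurableSet
  rw [show f ⁻¹' Iic (f x) = Iic x by ext; simp [hmono.le_iff_le], volume_Iic, volume_Iic,
    ENNReal.ofReal_eq_ofReal_iff x.2.1 (f x).2.1] at h
  exact Subtype.ext h.symm

theorem eq_symm_of_measurePreserving_of_strictAnti (hf : MeasurePreserving f volume volume)
    (hanti : StrictAnti f) : f = symm := by
  funext x
  have h := hf.measure_preimage (s := Iic (f x)) measurableSet_Iic.nullMeasurableSet
  rw [show f ⁻¹' Iic (f x) = Ici x by ext; simp [hanti.le_iff_ge], volume_Ici, volume_Iic,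
    ENNReal.ofReal_eq_ofReal_iff (sub_nonneg.2 x.2.2) (f x).2.1] at h
  exact Subtype.ext h.symm

theorem exists_lt_eq_of_measurePreserving (hc : Continuous f)
    (hf : MeasurePreserving f volume volume) (hid : f ≠ id) (hsymm : f ≠ symm) :
    ∃ u v, u < v ∧ f u = f v := by
  have hninj : ¬ Function.Injective f := fun hinj =>
    (hc.strictMono_of_inj_boundedOrder' hinj).elim
      (hid ∘ eq_id_of_measurePreserving_of_strictMono hf)
      (hsymm ∘ eq_symm_of_measurePreserving_of_strictAnti hf)
  obtain ⟨u, v, hfuv, huv⟩ := Function.not_injective_iff.1 hninj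
  rcases huv.lt_or_gt with huv | hvu
  exacts [⟨u, v, huv, hfuv⟩, ⟨v, u, hvu, hfuv.symm⟩]

end unitInterval

/-- Let `f ∈ C_λ` be different from `id` and from `1 − id`. Then the set
`B₀ = {c ∈ I : #Lev_f(c) > 1}` contains a (nondegenerate) interval; in particular there
is a set of positive Lebesgue measure on which `f` fails to be one-to-one. -/
theorem stmt15 (f : C(unitInterval, unitInterval))
    (hf : MeasurePreserving f volume volume)
    (hid : ⇑f ≠ id) (hsymm : ⇑f ≠ unitInterval.symm) :
    (∃ a b : unitInterval, a < b ∧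
      Set.Icc a b ⊆ {c : unitInterval | ∃ x y : unitInterval, x ≠ y ∧ f x = c ∧ f y = c}) ∧
    ∃ S : Set unitInterval, 0 < volume S ∧ ¬ Set.InjOn f S := by
  obtain ⟨u, v, huv, hfuv⟩ :=
    unitInterval.exists_lt_eq_of_measurePreserving f.continuous hf hid hsymm
  have hIcc : volume (Icc u v) ≠ 0 := by simpa [unitInterval.volume_Icc] using huv
  obtain ⟨a, b, hab, hsub⟩ :=
    f.continuous.exists_Icc_subset_of_eq huv hfuv (hf.exists_ne_of_measure_ne_zero hIcc (f u))
  refine ⟨⟨a, b, hab, hsub⟩, f ⁻¹' Icc a b, ?_, fun hinj => ?_⟩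
  · rw [hf.measure_preimage measurableSet_Icc.nullMeasurableSet, unitInterval.volume_Icc]
    simpa using hab
  · obtain ⟨x, y, hxy, hx, hy⟩ := hsub (left_mem_Icc.2 hab.le)
    exact hxy (hinj (by simp [hx, hab.le]) (by simp [hy, hab.le]) (hx.trans hy.symm))
end
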